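/- The function g : [0,1) → ℝ defined by g(x) = (1/2)·ln(1 + (1 − x)²) − ln(1 − x) + π − arccot(1 − x) − arccot(x), where arccot(y) = π/2 − arctan(y), is monotone increasing on [0,1); consequently g(x) ≥ g(0) = (1/2)·ln 2 + π/4 for all x ∈ [0,1). -/

import Mathlib

/-!
On `x < 1` the two logarithms and `arccot (1 - x)` differentiate to `x / ((1 - x)(1 + (1 - x)²))`,
so `g' x = x / ((1 - x)(1 + (1 - x)²)) + 1 / (1 + x²)`, which is nonnegative on `[0, 1)`.
-/

open Real

/-- The inverse cotangent, `arccot y = π/2 − arctan y`. -/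
noncomputable def arccot (y : ℝ) : ℝ := π / 2 - Real.arctan y

/-- The total angular thickness of the unit square at the boundary point `(x, 0)`. -/
noncomputable def g (x : ℝ) : ℝ :=
  (1 / 2) * Real.log (1 + (1 - x) ^ 2) - Real.log (1 - x) + π
    - arccot (1 - x) - arccot x

lemma hasDerivAt_arccot (x : ℝ) : HasDerivAt arccot (-(1 + x ^ 2)⁻¹) x := by
  have h := (hasDerivAt_arctan x).const_sub (π / 2)
  rw [one_div] at h
  exact h

lemma hasDerivAt_g {x : ℝ} (hx : x < 1) :
    HasDerivAt g (x / ((1 - x) * (1 + (1 - x) ^ 2)) + (1 + x ^ 2)⁻¹) x := by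
  have hu : 0 < 1 - x := sub_pos.mpr hx
  have hv : 0 < 1 + (1 - x) ^ 2 := by positivity
  have hsub : HasDerivAt (fun y : ℝ => 1 - y) (-1) x := (hasDerivAt_id x).const_sub 1
  have hlog_sq := ((hsub.pow 2).const_add 1).log hv.ne'
  have hlog := hsub.log hu.ne'
  have hcot := (hasDerivAt_arccot (1 - x)).comp x hsub
  have hg := ((((hlog_sq.const_mul (1 / 2)).sub hlog).add_const π).sub hcot).sub
    (hasDerivAt_arccot x)
  refine hg.congr_deriv ?_
  simp only [Pi.pow_apply]
  field_simp
  ring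

lemma monotoneOn_g : MonotoneOn g (Set.Ico 0 1) := by
  have hderiv_nonneg (x : ℝ) (hx : x ∈ Set.Ico (0 : ℝ) 1) :
      0 ≤ x / ((1 - x) * (1 + (1 - x) ^ 2)) + (1 + x ^ 2)⁻¹ := by
    have := hx.1
    have := sub_pos.mpr hx.2
    positivity
  exact monotoneOn_of_hasDerivWithinAt_nonneg (convex_Ico 0 1)
    (fun x hx => (hasDerivAt_g hx.2).continuousAt.continuousWithinAt)
    (fun x hx => (hasDerivAt_g (interior_subset hx).2).hasDerivWithinAt)
    (fun x hx => hderiv_nonneg x (interior_subset hx))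

lemma g_zero : g 0 = (1 / 2) * Real.log 2 + π / 4 := by
  norm_num [g, arccot, arctan_one]
  ring

/-- The function `g` is monotone increasing on `[0,1)`; consequently
`g(x) ≥ g(0) = (1/2)·ln 2 + π/4` for all `x ∈ [0,1)`. -/
theorem g_monotoneOn_and_ge :
    MonotoneOn g (Set.Ico (0 : ℝ) 1) ∧
      g 0 = (1 / 2) * Real.log 2 + π / 4 ∧
      ∀ x ∈ Set.Ico (0 : ℝ) 1, (1 / 2) * Real.log 2 + π / 4 ≤ g x :=
  ⟨monotoneOn_g, g_zero, fun _ hx =>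
    g_zero ▸ monotoneOn_g (Set.left_mem_Ico.mpr one_pos) hx hx.1⟩
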